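/- arXiv:0704.0229 — 3 statements merged into one kernel-verified Lean document; each statement's English description precedes it below -/
import Mathlib

section
/- Let f : ℕ → ℤ and suppose its generating function admits a positive form whose denominator contains the factor (1 − t): there are d, k ∈ ℕ, integers h_0, …, h_d with h_0 = 1 and h_i ≥ 0 for all i, and positive integers a_1, …, a_k and d_1, …, d_k, such that in ℤ⟦t⟧ one has (Σ_{n≥0} f(n) tⁿ) · (1 − t) · ∏_{j=1}^{k} (1 − t^{a_j})^{d_j} = Σ_{i=0}^{d} h_i t^i. Then f(n) ≥ 1 for every n ∈ ℕ. (This is the paper's claim that a counting function whose generating function has a positive form with some denominator exponent a_0 = 1 is strictly saturated.) -/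
/-!
Dividing by `1 - t^a` (with `a > 0`) is the recursion `A n = B n + A (n - a)`, so it keeps
coefficients nonnegative. Peeling off the factors `(1 - t^{a_j})^{d_j}` therefore shows that
`F(t) (1 - t)` has nonnegative coefficients, i.e. `f` is nondecreasing, and its constant
coefficient is `h_0 = 1 = f 0`.
-/

open PowerSeries

section Ring

variable {R : Type*} [Ring R]

theorem PowerSeries.constantCoeff_sum_C_mul_X_pow (h : ℕ → R) (d : ℕ) :
    constantCoeff (∑ i ∈ Finset.range (d + 1), C (h i) * X ^ i) = h 0 := by
  simp [← coeff_zero_eq_constantCoeff_apply]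

theorem PowerSeries.constantCoeff_mk_mul_one_sub_X (f : ℕ → R) :
    constantCoeff (mk f * (1 - X)) = f 0 := by
  simp

theorem PowerSeries.coeff_succ_mk_mul_one_sub_X (f : ℕ → R) (n : ℕ) :
    coeff (n + 1) (mk f * (1 - X)) = f (n + 1) - f n := by
  simp [mul_sub, coeff_succ_mul_X]

variable [PartialOrder R] [IsOrderedRing R]

theorem PowerSeries.coeff_sum_C_mul_X_pow_nonneg (h : ℕ → R) (d : ℕ)
    (hh : ∀ i, i ≤ d → 0 ≤ h i) (n : ℕ) :
    0 ≤ coeff n (∑ i ∈ Finset.range (d + 1), C (h i) * X ^ i) := by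
  rw [map_sum]
  refine Finset.sum_nonneg fun i hi => ?_
  rw [coeff_C_mul_X_pow]
  split_ifs
  · exact hh i (Nat.lt_succ_iff.mp (Finset.mem_range.mp hi))
  · exact le_rfl

theorem PowerSeries.coeff_nonneg_of_mul_one_sub_X_pow {A : R⟦X⟧} {a : ℕ} (ha : 0 < a)
    (hA : ∀ n, 0 ≤ coeff n (A * (1 - X ^ a))) (n : ℕ) : 0 ≤ coeff n A := by
  induction n using Nat.strong_induction_on with
  | _ n ih =>
    have hrec : coeff n A = coeff n (A * (1 - X ^ a)) + if a ≤ n then coeff (n - a) A else 0 := by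
      rw [mul_sub, mul_one, map_sub, coeff_mul_X_pow', sub_add_cancel]
    rw [hrec]
    split_ifs with hle
    · exact add_nonneg (hA n) (ih _ (by omega))
    · simpa using hA n

theorem PowerSeries.coeff_nonneg_of_mul_one_sub_X_pow_pow {A : R⟦X⟧} {a : ℕ} (ha : 0 < a)
    (m : ℕ) (hA : ∀ n, 0 ≤ coeff n (A * (1 - X ^ a) ^ m)) : ∀ n, 0 ≤ coeff n A := by
  induction m with
  | zero => simpa using hA
  | succ m ih =>
    refine ih (coeff_nonneg_of_mul_one_sub_X_pow ha ?_)
    simpa only [mul_assoc, ← pow_succ] using hA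

end Ring

section CommRing

variable {R : Type*} [CommRing R]

theorem PowerSeries.constantCoeff_prod_one_sub_X_pow_pow {ι : Type*} (s : Finset ι)
    (a e : ι → ℕ) (ha : ∀ j ∈ s, 0 < a j) :
    constantCoeff (∏ j ∈ s, (1 - X ^ a j) ^ e j : R⟦X⟧) = 1 := by
  rw [map_prod]
  refine Finset.prod_eq_one fun j hj => ?_
  simp [zero_pow (ha j hj).ne']

variable [PartialOrder R] [IsOrderedRing R]

theorem PowerSeries.coeff_nonneg_of_mul_prod_one_sub_X_pow_pow {ι : Type*} {A : R⟦X⟧}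
    (s : Finset ι) (a e : ι → ℕ) (ha : ∀ j ∈ s, 0 < a j)
    (hA : ∀ n, 0 ≤ coeff n (A * ∏ j ∈ s, (1 - X ^ a j) ^ e j)) : ∀ n, 0 ≤ coeff n A := by
  classical
  induction s using Finset.induction_on generalizing A with
  | empty => simpa only [Finset.prod_empty, mul_one] using hA
  | insert i s hi ih =>
    refine coeff_nonneg_of_mul_one_sub_X_pow_pow (ha i (Finset.mem_insert_self i s)) (e i) ?_
    refine ih (fun j hj => ha j (Finset.mem_insert_of_mem hj)) ?_
    simpa only [Finset.prod_insert hi, mul_assoc] using hA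

end CommRing

theorem stmt0_general (f : ℕ → ℤ) (d k : ℕ) (h : ℕ → ℤ) (a e : Fin k → ℕ)
    (ha : ∀ j, 0 < a j)
    (hh0 : h 0 = 1) (hh : ∀ i, i ≤ d → 0 ≤ h i)
    (hid : (PowerSeries.mk f) * (1 - PowerSeries.X) *
        ∏ j : Fin k, (1 - PowerSeries.X ^ (a j)) ^ (e j) =
      ∑ i ∈ Finset.range (d + 1), PowerSeries.C (h i) * PowerSeries.X ^ i) :
    ∀ n : ℕ, 1 ≤ f n := by
  have hdiff : ∀ n, 0 ≤ coeff n (mk f * (1 - X)) :=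
    coeff_nonneg_of_mul_prod_one_sub_X_pow_pow _ a e (fun j _ => ha j)
      (hid ▸ coeff_sum_C_mul_X_pow_nonneg h d hh)
  have hmono : Monotone f := monotone_nat_of_le_succ fun n => by
    simpa [coeff_succ_mk_mul_one_sub_X] using hdiff (n + 1)
  have hf0 : f 0 = 1 :=
    calc f 0 = constantCoeff (mk f * (1 - X) * ∏ j : Fin k, (1 - X ^ a j) ^ e j) := by
          rw [map_mul, constantCoeff_prod_one_sub_X_pow_pow _ a e (fun j _ => ha j), mul_one,
            constantCoeff_mk_mul_one_sub_X]
      _ = 1 := by rw [hid, constantCoeff_sum_C_mul_X_pow, hh0]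
  exact fun n => hf0 ▸ hmono (Nat.zero_le n)

/-- If the generating function of `f : ℕ → ℤ` admits a positive form whose denominator
contains the factor `(1 - t)`, then `f n ≥ 1` for every `n`. -/
theorem stmt0 (f : ℕ → ℤ) (d k : ℕ) (h : ℕ → ℤ) (a e : Fin k → ℕ)
    (ha : ∀ j, 0 < a j) (he : ∀ j, 0 < e j)
    (hh0 : h 0 = 1) (hh : ∀ i, i ≤ d → 0 ≤ h i)
    (hid : (PowerSeries.mk f) * (1 - PowerSeries.X) *
        ∏ j : Fin k, (1 - PowerSeries.X ^ (a j)) ^ (e j) =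
      ∑ i ∈ Finset.range (d + 1), PowerSeries.C (h i) * PowerSeries.X ^ i) :
    ∀ n : ℕ, 1 ≤ f n :=
  stmt0_general f d k h a e ha hh0 hh hid
end

section
/- Let a_0, …, a_k be positive integers, let h_0, …, h_D be integers with h_0 = 1 and h_i ≥ 0 for all i, and let f : ℕ → ℤ satisfy, in ℤ⟦t⟧, the identity (Σ_{n≥0} f(n) tⁿ) · ∏_{j=0}^{k} (1 − t^{a_j}) = Σ_{i=0}^{D} h_i t^i. Suppose F ∈ ℕ is such that every integer n > F can be written as n = Σ_{j=0}^{k} a_j x_j with all x_j ∈ ℕ. Then f(n) ≥ 1 for every n > D + F. (This is the quantitative content of the paper's lemma bounding the saturation index of a quasipolynomial whose generating function has a positive form: the saturation index is at most D + F + 1, which is polynomial in max{a_j} and k.) -/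
/-!
The inverse `G = ∏ⱼ 1/(1 - t^{aⱼ}) = ∏ⱼ ∑ₘ t^{aⱼ m}` of the denominator has nonnegative
coefficients, and its `n`-th coefficient counts the representations `n = ∑ⱼ aⱼ xⱼ`, so it is at
least `1` for `n > F`.
Since `∑ f(n) tⁿ = h(t) · G` with `h` having nonnegative coefficients and `h₀ = 1`, the `n`-th
coefficient of the product is at least `h₀ · Gₙ ≥ 1`.
-/

open PowerSeries Finset

namespace PowerSeries

section Nonneg

variable {R : Type*} [CommSemiring R] [PartialOrder R] [IsOrderedRing R]

theorem coeff_mul_coeff_le_coeff_mul {φ ψ : R⟦X⟧} (hφ : ∀ n, 0 ≤ coeff n φ)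
    (hψ : ∀ n, 0 ≤ coeff n ψ) (i j : ℕ) :
    coeff i φ * coeff j ψ ≤ coeff (i + j) (φ * ψ) := by
  rw [coeff_mul]
  exact single_le_sum (f := fun p => coeff p.1 φ * coeff p.2 ψ)
    (fun p _ => mul_nonneg (hφ p.1) (hψ p.2)) 
    (mem_antidiagonal.mpr rfl : (i, j) ∈ antidiagonal (i + j))

variable {ι : Type*} {φ : ι → R⟦X⟧}

theorem coeff_prod_nonneg {s : Finset ι} (hφ : ∀ i ∈ s, ∀ n, 0 ≤ coeff n (φ i)) (n : ℕ) :
    0 ≤ coeff n (∏ i ∈ s, φ i) := by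
  classical
  rw [coeff_prod]
  exact sum_nonneg fun l _ => prod_nonneg fun i hi => hφ i hi (l i)

theorem prod_coeff_le_coeff_prod [Fintype ι] (hφ : ∀ i n, 0 ≤ coeff n (φ i)) (l : ι → ℕ) :
    ∏ i, coeff (l i) (φ i) ≤ coeff (∑ i, l i) (∏ i, φ i) := by
  classical
  rw [coeff_prod]
  exact single_le_sum (f := fun m : ι →₀ ℕ => ∏ i, coeff (m i) (φ i))
    (fun m _ => prod_nonneg fun i _ => hφ i (m i))
    (mem_finsuppAntidiag.mpr ⟨rfl, subset_univ _⟩ : Finsupp.equivFunOnFinite.symm l ∈ _)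

end Nonneg

theorem coeff_sum_C_mul_X_pow {R : Type*} [CommSemiring R] (s : Finset ℕ) (h : ℕ → R)
    (n : ℕ) : coeff n (∑ i ∈ s, C (h i) * X ^ i) = if n ∈ s then h n else 0 := by
  simp [map_sum]

section Expand

variable {R : Type*} [CommRing R]

theorem expand_mk_one_mul_one_sub_X_pow (a : ℕ) (ha : a ≠ 0) :
    expand a ha (mk 1 : R⟦X⟧) * (1 - X ^ a) = 1 := by
  simpa using congrArg (expand a ha) (mk_one_mul_one_sub_eq_one (S := R))

variable [PartialOrder R] [IsOrderedRing R]

theorem coeff_expand_mk_one_nonneg (a : ℕ) (ha : a ≠ 0) (n : ℕ) :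
    0 ≤ coeff n (expand a ha (mk 1 : R⟦X⟧)) := by
  rw [coeff_expand]
  split_ifs <;> simp

theorem one_le_coeff_prod_expand_mk_one {ι : Type*} [Fintype ι]
    (a : ι → ℕ) (ha : ∀ j, a j ≠ 0) (x : ι → ℕ) :
    1 ≤ coeff (∑ j, a j * x j) (∏ j, expand (a j) (ha j) (mk 1 : R⟦X⟧)) := by
  calc (1 : R) = ∏ j, coeff (a j * x j) (expand (a j) (ha j) (mk 1 : R⟦X⟧)) := by
        simp [coeff_expand_mul]
    _ ≤ _ := prod_coeff_le_coeff_prod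
        (fun j => coeff_expand_mk_one_nonneg (a j) (ha j)) fun j => a j * x j

end Expand

end PowerSeries

/-- Quantitative saturation bound: if the generating function of `f` has a positive form
with denominator `∏ (1 - t^{a_j})` and `F` bounds the Frobenius number of the `a_j`,
then `f n ≥ 1` for all `n > D + F`. -/
theorem stmt2 (k D : ℕ) (a : Fin (k + 1) → ℕ) (ha : ∀ j, 0 < a j)
    (h : ℕ → ℤ) (hh0 : h 0 = 1) (hh : ∀ i, i ≤ D → 0 ≤ h i)
    (f : ℕ → ℤ)
    (hid : (PowerSeries.mk f) * ∏ j : Fin (k + 1), (1 - PowerSeries.X ^ (a j)) =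
      ∑ i ∈ Finset.range (D + 1), PowerSeries.C (h i) * PowerSeries.X ^ i)
    (F : ℕ)
    (hF : ∀ n : ℕ, F < n → ∃ x : Fin (k + 1) → ℕ, ∑ j, a j * x j = n) :
    ∀ n : ℕ, D + F < n → 1 ≤ f n := by
  intro n hn
  set N := ∑ i ∈ range (D + 1), C (h i) * X ^ i
  set G := ∏ j, expand (a j) (ha j).ne' (mk 1 : ℤ⟦X⟧)
  have hG_inv : (∏ j, (1 - X ^ (a j))) * G = 1 := by
    rw [← prod_mul_distrib]
    exact prod_eq_one fun j _ => by rw [mul_comm, expand_mk_one_mul_one_sub_X_pow]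
  have hf : mk f = N * G := by rw [← hid, mul_assoc, hG_inv, mul_one]
  have hN : ∀ m, 0 ≤ coeff m N := fun m => by
    rw [coeff_sum_C_mul_X_pow]
    split_ifs with hm
    exacts [hh m (Nat.lt_succ_iff.mp (mem_range.mp hm)), le_rfl]
  have hG : ∀ m, 0 ≤ coeff m G :=
    coeff_prod_nonneg fun j _ => coeff_expand_mk_one_nonneg (a j) (ha j).ne'
  obtain ⟨x, hx⟩ := hF n (by omega)
  calc 1 ≤ coeff n G := hx ▸ one_le_coeff_prod_expand_mk_one a (fun j => (ha j).ne') x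
    _ = coeff 0 N * coeff n G := by
      rw [coeff_sum_C_mul_X_pow, if_pos (mem_range.mpr D.succ_pos), hh0, one_mul]
    _ ≤ coeff (0 + n) (N * G) := coeff_mul_coeff_le_coeff_mul hN hG 0 n
    _ = f n := by rw [zero_add, ← hf, coeff_mk]
end

section
/- Let M be an additive commutative monoid, R a commutative ring, and A a commutative R-algebra that is an integral domain, equipped with a grading 𝒜 : M → Submodule R A making A a graded R-algebra (so A is the internal direct sum of the 𝒜(m), 1 ∈ 𝒜(0), and 𝒜(m)·𝒜(m') ⊆ 𝒜(m + m')). Suppose A is generated as an R-algebra by finitely many nonzero homogeneous elements s_1, …, s_r with s_t ∈ 𝒜(m_t). Then the support {m ∈ M : 𝒜(m) ≠ 0} is exactly the additive submonoid of M generated by m_1, …, m_r; in particular, it is a finitely generated submonoid of M. (This is the key step in the paper's proof, following Brion–Knop, that the semigroup of weights occurring in a finitely generated multigraded invariant ring — and hence the semigroup T(H,G) of pairs of dominant weights with nonzero restriction multiplicity — is finitely generated.) -/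
/-! The degrees of the generators lie in the support, and in a domain the support is closed under
addition because a product of nonzero homogeneous elements is nonzero; so the closure of the degrees
is contained in the support. Conversely, monomials in the generators are homogeneous with degrees in
that closure, and they span `A`; hence the projection onto a degree outside the closure vanishes on
all of `A`, which forces the corresponding graded piece to be zero. -/

open DirectSum

section GradingSupport

variable {M : Type*} [AddCommMonoid M] {R : Type*} [CommSemiring R] {A : Type*} [Semiring A]
  [Algebra R A]

def gradingSupport [Nontrivial A] [NoZeroDivisors A] (𝒜 : M → Submodule R A)
    [SetLike.GradedMonoid 𝒜] : AddSubmonoid M where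
  carrier := {μ | 𝒜 μ ≠ ⊥}
  zero_mem' := (Submodule.ne_bot_iff _).2 ⟨1, SetLike.one_mem_graded 𝒜, one_ne_zero⟩
  add_mem' {μ ν} hμ hν := by
    obtain ⟨x, hx, hx0⟩ := (Submodule.ne_bot_iff _).1 hμ
    obtain ⟨y, hy, hy0⟩ := (Submodule.ne_bot_iff _).1 hν
    exact (Submodule.ne_bot_iff _).2 ⟨x * y, SetLike.mul_mem_graded hx hy, mul_ne_zero hx0 hy0⟩

theorem closure_degrees_le_gradingSupport [Nontrivial A] [NoZeroDivisors A]
    (𝒜 : M → Submodule R A) [SetLike.GradedMonoid 𝒜] {ι : Type*} {s : ι → A} {m : ι → M}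
    (hmem : ∀ t, s t ∈ 𝒜 (m t)) (hne : ∀ t, s t ≠ 0) :
    AddSubmonoid.closure (Set.range m) ≤ gradingSupport 𝒜 :=
  AddSubmonoid.closure_le.2 <| Set.range_subset_iff.2 fun t ↦
    (Submodule.ne_bot_iff _).2 ⟨s t, hmem t, hne t⟩

theorem exists_degree_mem_closure_of_mem_submonoidClosure (𝒜 : M → Submodule R A)
    [SetLike.GradedMonoid 𝒜] {ι : Type*} {s : ι → A} {m : ι → M} (hmem : ∀ t, s t ∈ 𝒜 (m t))
    {g : A} (hg : g ∈ Submonoid.closure (Set.range s)) :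
    ∃ d ∈ AddSubmonoid.closure (Set.range m), g ∈ 𝒜 d := by
  induction hg using Submonoid.closure_induction with
  | mem _ h =>
    obtain ⟨t, rfl⟩ := h
    exact ⟨m t, AddSubmonoid.subset_closure ⟨t, rfl⟩, hmem t⟩
  | one => exact ⟨0, zero_mem _, SetLike.one_mem_graded 𝒜⟩
  | mul _ _ _ _ ha hb =>
    obtain ⟨d, hd, hda⟩ := ha
    obtain ⟨e, he, heb⟩ := hb
    exact ⟨d + e, add_mem hd he, SetLike.mul_mem_graded hda heb⟩

theorem eq_bot_of_notMem_closure_degrees [DecidableEq M] (𝒜 : M → Submodule R A)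
    [GradedAlgebra 𝒜] {ι : Type*} {s : ι → A} {m : ι → M} (hmem : ∀ t, s t ∈ 𝒜 (m t))
    (hgen : Algebra.adjoin R (Set.range s) = ⊤) {μ : M}
    (hμ : μ ∉ AddSubmonoid.closure (Set.range m)) : 𝒜 μ = ⊥ := by
  have hproj : GradedAlgebra.proj 𝒜 μ = 0 := by
    refine LinearMap.ker_eq_top.1 (top_le_iff.1 ?_)
    rw [← Algebra.top_toSubmodule, ← hgen, Algebra.adjoin_eq_span, Submodule.span_le]
    intro g hg
    obtain ⟨d, hd, hgd⟩ := exists_degree_mem_closure_of_mem_submonoidClosure 𝒜 hmem hg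
    rw [SetLike.mem_coe, LinearMap.mem_ker, GradedAlgebra.proj_apply,
      decompose_of_mem_ne 𝒜 hgd (ne_of_mem_of_not_mem hd hμ)]
  refine (Submodule.eq_bot_iff _).2 fun x hx ↦ ?_
  rw [← decompose_of_mem_same 𝒜 hx, ← GradedAlgebra.proj_apply, hproj, LinearMap.zero_apply]

end GradingSupport

/-- If a graded domain `A` is generated as an `R`-algebra by finitely many nonzero
homogeneous elements `s t ∈ 𝒜 (m t)`, then the support of the grading is exactly the
additive submonoid generated by the degrees `m t`; in particular it is finitely
generated. -/
theorem stmt9 {M : Type*} [AddCommMonoid M] [DecidableEq M]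
    {R : Type*} [CommRing R]
    {A : Type*} [CommRing A] [IsDomain A] [Algebra R A]
    (𝒜 : M → Submodule R A) [GradedAlgebra 𝒜]
    (r : ℕ) (s : Fin r → A) (m : Fin r → M)
    (hmem : ∀ t, s t ∈ 𝒜 (m t)) (hne : ∀ t, s t ≠ 0)
    (hgen : Algebra.adjoin R (Set.range s) = ⊤) :
    {μ : M | 𝒜 μ ≠ ⊥} = (AddSubmonoid.closure (Set.range m) : Set M) :=
  Set.Subset.antisymm
    (fun _ hμ ↦ not_imp_comm.1 (eq_bot_of_notMem_closure_degrees 𝒜 hmem hgen) hμ)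
    (closure_degrees_le_gradingSupport 𝒜 hmem hne)
end
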